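/- arXiv:1602.01283 — 3 statements merged into one kernel-verified Lean document; each statement's English description precedes it below -/
import Mathlib

section
/- Let W, W₁, W₂, … be i.i.d. nonnegative random variables with E[W^β] < ∞ for all β < α, where 1 < α < 2, and let (aₙ) be a regularly varying sequence of index 1/α with aₙ → ∞ and 1/aₙ = o(n^{−1/α+γ}) for every γ > 0. Then (1/aₙ)·(∑_{i=1}^n W_i²)/L_n → 0 almost surely, where L_n = ∑_{i=1}^n W_i and E[W] > 0. -/
open MeasureTheory ProbabilityTheory Filter Topology Finset Asymptotics

/-- `h` is slowly varying at infinity. -/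
def SlowlyVarying (h : ℝ → ℝ) : Prop :=
  ∀ t : ℝ, 0 < t → Tendsto (fun x => h (t * x) / h x) atTop (𝓝 1)

/-- A positive sequence is regularly varying of index `ρ`. -/
def RegularlyVaryingSeq (a : ℕ → ℝ) (ρ : ℝ) : Prop :=
  ∃ ℓ : ℝ → ℝ, SlowlyVarying ℓ ∧ (∀ᶠ x in atTop, 0 < ℓ x) ∧
    ∀ᶠ n in atTop, a n = (n : ℝ) ^ ρ * ℓ n

/-! For `0 < s ≤ 2` superadditivity of `x ↦ x^(2/s)` gives `∑ Wᵢ² ≤ (∑ Wᵢ^s)^(2/s)`. If moreover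
`s < α`, the strong law of large numbers applies to `Wᵢ^s` and to `Wᵢ`, so `∑ Wᵢ^s = O(n)` and
`L_n ≍ n`, whence the quotient is `O(n^(2/s - 1) / aₙ)`. Taking `s` close to `α` makes
`2/s - 1 < 1/α`, and the bound `1/aₙ = o(n^(-1/α + γ))` with small `γ` sends it to zero. -/

theorem Real.sum_rpow_le_rpow_sum {ι : Type*} (t : Finset ι) {f : ι → ℝ}
    (hf : ∀ i ∈ t, 0 ≤ f i) {p : ℝ} (hp : 1 ≤ p) :
    ∑ i ∈ t, f i ^ p ≤ (∑ i ∈ t, f i) ^ p := by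
  induction t using Finset.cons_induction with
  | empty => simp [Real.zero_rpow (by positivity : p ≠ 0)]
  | cons j t _ ih =>
    have hf' : ∀ i ∈ t, 0 ≤ f i := fun i hi => hf i (mem_cons_of_mem hi)
    rw [sum_cons, sum_cons]
    calc f j ^ p + ∑ i ∈ t, f i ^ p ≤ f j ^ p + (∑ i ∈ t, f i) ^ p := by gcongr; exact ih hf'
      _ ≤ (f j + ∑ i ∈ t, f i) ^ p :=
        Real.add_rpow_le_rpow_add (hf j (mem_cons_self _ _)) (sum_nonneg hf') hp

theorem sum_sq_le_rpow_sum_rpow {ι : Type*} (t : Finset ι) {x : ι → ℝ}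
    (hx : ∀ i ∈ t, 0 ≤ x i) {s : ℝ} (hs0 : 0 < s) (hs2 : s ≤ 2) :
    ∑ i ∈ t, x i ^ 2 ≤ (∑ i ∈ t, x i ^ s) ^ (2 / s) :=
  calc ∑ i ∈ t, x i ^ 2 = ∑ i ∈ t, (x i ^ s) ^ (2 / s) := sum_congr rfl fun i hi => by
        rw [← Real.rpow_mul (hx i hi), mul_div_cancel₀ _ hs0.ne', Real.rpow_two]
    _ ≤ (∑ i ∈ t, x i ^ s) ^ (2 / s) :=
      Real.sum_rpow_le_rpow_sum t (fun i hi => Real.rpow_nonneg (hx i hi) s)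
        ((one_le_div hs0).2 hs2)

theorem isBigO_natCast_of_tendsto_avg {T : ℕ → ℝ} {c : ℝ}
    (hT : Tendsto (fun n : ℕ => (n : ℝ)⁻¹ * T n) atTop (𝓝 c)) :
    T =O[atTop] fun n : ℕ => (n : ℝ) := by
  refine isBigO_of_div_tendsto_nhds ?_ c (hT.congr fun n => (div_eq_inv_mul (T n) n).symm)
  filter_upwards [eventually_ne_atTop 0] with n hn h
  exact absurd (Nat.cast_eq_zero.1 h) hn

theorem isBigO_inv_of_tendsto_avg {L : ℕ → ℝ} {m : ℝ} (hm : m ≠ 0)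
    (hL : Tendsto (fun n : ℕ => (n : ℝ)⁻¹ * L n) atTop (𝓝 m)) :
    (fun n => (L n)⁻¹) =O[atTop] fun n : ℕ => (n : ℝ) ^ (-1 : ℝ) :=
  isBigO_of_div_tendsto_nhds_of_ne_zero
    (by simpa only [Real.rpow_neg_one, div_inv_eq_mul, inv_inv] using hL) hm

theorem tendsto_mul_div_of_tendsto_avg {b S T L : ℕ → ℝ} {m c p q : ℝ} (hm : m ≠ 0)
    (hL : Tendsto (fun n : ℕ => (n : ℝ)⁻¹ * L n) atTop (𝓝 m))
    (hT : Tendsto (fun n : ℕ => (n : ℝ)⁻¹ * T n) atTop (𝓝 c))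
    (hp : 0 ≤ p) (hST : ∀ n, ‖S n‖ ≤ T n ^ p)
    (hb : b =O[atTop] fun n : ℕ => (n : ℝ) ^ q) (hpq : q + p < 1) :
    Tendsto (fun n => b n * S n / L n) atTop (𝓝 0) := by
  have hS : S =O[atTop] fun n : ℕ => (n : ℝ) ^ p :=
    (isBigO_of_le _ fun n => (hST n).trans (le_abs_self _)).trans
      ((isBigO_natCast_of_tendsto_avg hT).rpow hp
        (Eventually.of_forall fun n => Nat.cast_nonneg n))
  have hlim : Tendsto (fun n : ℕ => (n : ℝ) ^ (q + p - 1)) atTop (𝓝 0) := by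
    have := (tendsto_rpow_neg_atTop (y := 1 - (q + p)) (by linarith)).comp
      tendsto_natCast_atTop_atTop
    simpa only [neg_sub, Function.comp_def] using this
  refine ((hb.mul hS).mul (isBigO_inv_of_tendsto_avg hm hL)).trans_tendsto (hlim.congr' ?_)
  filter_upwards [eventually_gt_atTop 0] with n hn
  have hn : (0 : ℝ) < n := Nat.cast_pos.2 hn
  rw [← Real.rpow_add hn, ← Real.rpow_add hn, sub_eq_add_neg]

theorem exists_exponent_of_one_lt_of_lt_two {α : ℝ} (hα1 : 1 < α) (hα2 : α < 2) :
    ∃ s : ℝ, 0 < s ∧ s ≤ 2 ∧ s < α ∧ 2 / s < 1 + 1 / α := by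
  -- `1/s` is the midpoint of `1/α` and `(α + 1)/(2α)`, the reciprocals of the admissible bounds.
  refine ⟨4 * α / (3 + α), by positivity, ?_, ?_, ?_⟩
  · rw [div_le_iff₀ (by linarith)]; linarith
  · rw [div_lt_iff₀ (by linarith)]; nlinarith
  · rw [div_div_eq_mul_div, one_add_div (by positivity : α ≠ 0),
      div_lt_div_iff₀ (by positivity) (by positivity)]
    nlinarith

theorem ae_tendsto_avg_comp {Ω β : Type*} [MeasurableSpace Ω] [MeasurableSpace β]
    {μ : Measure Ω} {X : ℕ → Ω → β} (hindep : Pairwise fun i j => X i ⟂ᵢ[μ] X j)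
    (hident : ∀ i, IdentDistrib (X i) (X 0) μ μ) {g : β → ℝ} (hg : Measurable g)
    (hint : Integrable (fun ω => g (X 0 ω)) μ) :
    ∀ᵐ ω ∂μ, Tendsto (fun n : ℕ => (n : ℝ)⁻¹ * ∑ i ∈ range n, g (X i ω)) atTop
      (𝓝 (∫ ω, g (X 0 ω) ∂μ)) := by
  simpa only [smul_eq_mul] using strong_law_ae (fun i ω => g (X i ω)) hint
    (fun i j hij => (hindep hij).comp hg hg) fun i => (hident i).comp hg

theorem stmt_8_general {Ω : Type*} [MeasurableSpace Ω] (μ : Measure Ω)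
    (W : ℕ → Ω → ℝ)
    (hnonneg : ∀ i, ∀ᵐ ω ∂μ, 0 ≤ W i ω)
    (hindep : iIndepFun W μ)
    (hident : ∀ i, IdentDistrib (W i) (W 0) μ μ)
    (α : ℝ) (hα1 : 1 < α) (hα2 : α < 2)
    (hmom : ∀ β : ℝ, β < α → Integrable (fun ω => (W 0 ω) ^ β) μ)
    (hEW : 0 < ∫ ω, W 0 ω ∂μ)
    (a : ℕ → ℝ)
    (halittle : ∀ γ : ℝ, 0 < γ →
      (fun n : ℕ => 1 / a n) =o[atTop] fun n : ℕ => (n : ℝ) ^ (-(1 / α) + γ)) :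
    ∀ᵐ ω ∂μ, Tendsto (fun n : ℕ =>
        (1 / a n) * (∑ i ∈ range n, (W i ω) ^ 2) / (∑ i ∈ range n, W i ω))
      atTop (𝓝 0) := by
  obtain ⟨s, hs0, hs2, hsα, hsexp⟩ := exists_exponent_of_one_lt_of_lt_two hα1 hα2
  have hpair : Pairwise fun i j => W i ⟂ᵢ[μ] W j := fun i j hij => hindep.indepFun hij
  have hL := ae_tendsto_avg_comp hpair hident (g := fun x => x) measurable_id
    (by simpa using hmom 1 hα1)
  have hT := ae_tendsto_avg_comp hpair hident (g := fun x => x ^ s)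
    (measurable_id.pow_const s) (hmom s hsα)
  filter_upwards [hL, hT, ae_all_iff.2 hnonneg] with ω hLω hTω hWω
  have hγ : 0 < (1 + 1 / α - 2 / s) / 2 := by linarith
  refine tendsto_mul_div_of_tendsto_avg (p := 2 / s) hEW.ne' hLω hTω (by positivity)
    (fun n => ?_) (halittle _ hγ).isBigO (by linarith)
  rw [Real.norm_of_nonneg (sum_nonneg fun i _ => sq_nonneg _)]
  exact sum_sq_le_rpow_sum_rpow _ (fun i _ => hWω i) hs0 hs2

theorem stmt_8 {Ω : Type*} [MeasurableSpace Ω] (μ : Measure Ω) [IsProbabilityMeasure μ]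
    (W : ℕ → Ω → ℝ) (hmeas : ∀ i, Measurable (W i))
    (hnonneg : ∀ i, ∀ᵐ ω ∂μ, 0 ≤ W i ω)
    (hindep : iIndepFun W μ)
    (hident : ∀ i, IdentDistrib (W i) (W 0) μ μ)
    (α : ℝ) (hα1 : 1 < α) (hα2 : α < 2)
    (hmom : ∀ β : ℝ, β < α → Integrable (fun ω => (W 0 ω) ^ β) μ)
    (hEW : 0 < ∫ ω, W 0 ω ∂μ)
    (a : ℕ → ℝ) (ha : RegularlyVaryingSeq a (1 / α))
    (hainf : Tendsto a atTop atTop)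
    (halittle : ∀ γ : ℝ, 0 < γ →
      (fun n : ℕ => 1 / a n) =o[atTop] fun n : ℕ => (n : ℝ) ^ (-(1 / α) + γ)) :
    ∀ᵐ ω ∂μ, Tendsto (fun n : ℕ =>
        (1 / a n) * (∑ i ∈ range n, (W i ω) ^ 2) / (∑ i ∈ range n, W i ω))
      atTop (𝓝 0) :=
  stmt_8_general μ W hnonneg hindep hident α hα1 hα2 hmom hEW a halittle
end

section
/- Let W₁, W₂ be independent nonnegative random variables each with tail P(W > x) ~ c·x^{−α}·h(x) for some c > 0, α ∈ (1,2), and slowly varying h, and suppose there is δ > 0 with 2 − α − 1/α + 2δ < 0 and constants c₁ > 0 such that E[W²·1{W ≤ x}] ≤ c₁·x^{2−α+δ} and E[W·1{W ≥ x}] ≤ c₁·x^{1−α+δ} for all x > 1. If (aₙ) satisfies 1/aₙ = o(n^{−1/α+δ}), then (1/aₙ)·E[W₁²W₂²·1{W₁W₂ ≤ n}] → 0 as n → ∞. -/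
open MeasureTheory ProbabilityTheory Filter Topology Asymptotics Set

/-!
Chebyshev's inequality on the dyadic shells `{s ≤ W < 2s}`, fed by the truncated second-moment
bound, gives `P(W > t) = O(t^(-(α - δ)))`, hence `E[W^β] < ∞` for every `β < α - δ`. On
`{W₁W₂ ≤ n}` one has `(W₁W₂)² ≤ n^(2-β) (W₁W₂)^β`, and `(W₁W₂)^β` is integrable by independence,
so the truncated moment is `O(n^(2-β))`. Dividing by `aₙ` leaves `o(n^(2 - β - 1/α + δ))`, and the
condition `2 - α - 1/α + 2δ < 0` is exactly what allows `β < α - δ` with `2 - β - 1/α + δ < 0`.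
-/

lemma sq_le_rpow_mul_rpow {x n β : ℝ} (hx : 0 ≤ x) (hxn : x ≤ n) (hβ : β ≤ 2) :
    x ^ 2 ≤ n ^ (2 - β) * x ^ β :=
  calc x ^ 2 = x ^ (2 - β) * x ^ β := by
        rw [← Real.rpow_add' hx (by norm_num), sub_add_cancel, Real.rpow_two]
    _ ≤ n ^ (2 - β) * x ^ β :=
        mul_le_mul_of_nonneg_right (Real.rpow_le_rpow hx hxn (by linarith)) (by positivity)

lemma tendsto_mul_of_isLittleO_rpow_of_isBigO_rpow {u v : ℕ → ℝ} {r s : ℝ}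
    (hu : u =o[atTop] fun n => (n : ℝ) ^ r) (hv : v =O[atTop] fun n => (n : ℝ) ^ s)
    (hrs : r + s < 0) :
    Tendsto (fun n => u n * v n) atTop (𝓝 0) := by
  refine (hu.mul_isBigO hv).trans_tendsto ?_
  have hpow : Tendsto (fun n : ℕ => (n : ℝ) ^ (r + s)) atTop (𝓝 0) := by
    have h := tendsto_rpow_neg_atTop (y := -(r + s)) (by linarith)
    rw [neg_neg] at h
    exact h.comp tendsto_natCast_atTop_atTop
  refine hpow.congr' ?_
  filter_upwards [eventually_gt_atTop 0] with n hn
  exact Real.rpow_add (Nat.cast_pos.2 hn) r s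

section Moments

variable {Ω : Type*} [MeasurableSpace Ω] {μ : Measure Ω}

lemma measure_lt_le_of_measure_dyadic_le {f : Ω → ℝ} {K p t : ℝ} (hK : 0 ≤ K) (hp : 0 < p)
    (ht : 0 < t)
    (hband : ∀ s, t ≤ s → μ {ω | s ≤ f ω ∧ f ω < 2 * s} ≤ ENNReal.ofReal (K * s ^ (-p))) :
    μ {ω | t < f ω} ≤ ENNReal.ofReal (K / (1 - 2 ^ (-p)) * t ^ (-p)) := by
  set r : ℝ := 2 ^ (-p)
  have hr0 : 0 ≤ r := by positivity
  have hr1 : r < 1 := Real.rpow_lt_one_of_one_lt_of_neg one_lt_two (neg_lt_zero.2 hp)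
  have cover : {ω | t < f ω} ⊆ ⋃ k : ℕ, {ω | 2 ^ k * t ≤ f ω ∧ f ω < 2 * (2 ^ k * t)} := by
    intro ω hω
    obtain ⟨k, hk, hk'⟩ := exists_nat_pow_near ((one_le_div ht).2 (le_of_lt hω)) one_lt_two
    rw [le_div_iff₀ ht] at hk
    rw [div_lt_iff₀ ht, pow_succ'] at hk'
    exact mem_iUnion.2 ⟨k, hk, by linarith⟩
  have hband_k : ∀ k : ℕ, μ {ω | 2 ^ k * t ≤ f ω ∧ f ω < 2 * (2 ^ k * t)} ≤
      ENNReal.ofReal (K * t ^ (-p)) * ENNReal.ofReal r ^ k := by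
    intro k
    have hscale : (2 ^ k * t) ^ (-p) = r ^ k * t ^ (-p) := by
      rw [Real.mul_rpow (by positivity) ht.le, Real.rpow_pow_comm zero_le_two]
    refine (hband _ (le_mul_of_one_le_left ht.le (one_le_pow₀ one_le_two))).trans_eq ?_
    rw [hscale, ← ENNReal.ofReal_pow hr0, ← ENNReal.ofReal_mul (by positivity)]
    ring_nf
  calc μ {ω | t < f ω}
      ≤ ∑' k : ℕ, μ {ω | 2 ^ k * t ≤ f ω ∧ f ω < 2 * (2 ^ k * t)} :=
        (measure_mono cover).trans (measure_iUnion_le _)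
    _ ≤ ∑' k : ℕ, ENNReal.ofReal (K * t ^ (-p)) * ENNReal.ofReal r ^ k :=
        ENNReal.tsum_le_tsum hband_k
    _ = ENNReal.ofReal (K / (1 - r) * t ^ (-p)) := by
        rw [ENNReal.tsum_mul_left, ENNReal.tsum_geometric, ← ENNReal.ofReal_one,
          ← ENNReal.ofReal_sub _ hr0, ← ENNReal.ofReal_inv_of_pos (by linarith),
          ← ENNReal.ofReal_mul (by positivity)]
        ring_nf

lemma integrableOn_sq_le_of_nonneg [IsFiniteMeasure μ] {W : Ω → ℝ} (hW : Measurable W)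
    (hnn : ∀ᵐ ω ∂μ, 0 ≤ W ω) (x : ℝ) :
    IntegrableOn (fun ω => W ω ^ 2) {ω | W ω ≤ x} μ := by
  refine Measure.integrableOn_of_bounded (M := x ^ 2) (measure_ne_top _ _)
    (hW.pow_const 2).aestronglyMeasurable ?_
  filter_upwards [self_mem_ae_restrict (measurableSet_le hW measurable_const),
    ae_restrict_of_ae hnn] with ω hωx hω0
  rw [Real.norm_of_nonneg (sq_nonneg _)]
  exact pow_le_pow_left₀ hω0 hωx 2

lemma measure_dyadic_le_of_setIntegral_sq_le [IsFiniteMeasure μ] {W : Ω → ℝ} (hW : Measurable W)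
    (hnn : ∀ᵐ ω ∂μ, 0 ≤ W ω) {C q : ℝ}
    (hmom : ∀ x, 1 < x → ∫ ω in {ω | W ω ≤ x}, W ω ^ 2 ∂μ ≤ C * x ^ q) {s : ℝ} (hs : 1 < 2 * s) :
    μ {ω | s ≤ W ω ∧ W ω < 2 * s} ≤ ENNReal.ofReal (C * 2 ^ q * s ^ (q - 2)) := by
  have hs0 : 0 < s := by linarith
  set B := {ω | s ≤ W ω ∧ W ω < 2 * s}
  have hBm : MeasurableSet B := (measurableSet_le measurable_const hW).inter
    (measurableSet_lt hW measurable_const)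
  have hB : B ⊆ {ω | W ω ≤ 2 * s} := fun ω hω => hω.2.le
  have chebyshev : s ^ 2 * μ.real B ≤ C * 2 ^ q * s ^ q :=
    calc s ^ 2 * μ.real B ≤ ∫ ω in B, W ω ^ 2 ∂μ :=
          setIntegral_ge_of_const_le_real hBm (measure_ne_top _ _)
            (fun ω hω => pow_le_pow_left₀ hs0.le hω.1 2)
            ((integrableOn_sq_le_of_nonneg hW hnn _).mono_set hB)
      _ ≤ ∫ ω in {ω | W ω ≤ 2 * s}, W ω ^ 2 ∂μ :=
          setIntegral_mono_set (integrableOn_sq_le_of_nonneg hW hnn _)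
            (Eventually.of_forall fun ω => sq_nonneg _) (Eventually.of_forall hB)
      _ ≤ C * (2 * s) ^ q := hmom _ hs
      _ = C * 2 ^ q * s ^ q := by rw [Real.mul_rpow zero_le_two hs0.le, mul_assoc]
  rw [← ofReal_measureReal]
  refine ENNReal.ofReal_le_ofReal ?_
  rw [Real.rpow_sub hs0, Real.rpow_two, ← mul_div_assoc, le_div_iff₀ (by positivity)]
  linarith

lemma integrable_rpow_of_measure_lt_le [IsFiniteMeasure μ] {W : Ω → ℝ} (hW : Measurable W)
    (hnn : ∀ᵐ ω ∂μ, 0 ≤ W ω) {K p β : ℝ} (hβ : 0 < β) (hβp : β < p)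
    (htail : ∀ t, 1 < t → μ {ω | t < W ω} ≤ ENNReal.ofReal (K * t ^ (-p))) :
    Integrable (fun ω => W ω ^ β) μ := by
  have near_zero : ∫⁻ t in Ioc 0 1, μ {ω | t < W ω} * ENNReal.ofReal (t ^ (β - 1)) < ⊤ := by
    have hint : IntegrableOn (fun t : ℝ => μ.real univ * t ^ (β - 1)) (Ioc 0 1) :=
      ((intervalIntegral.intervalIntegrable_rpow' (a := 0) (b := 1) (by linarith)).1).const_mul _
    refine lt_of_le_of_lt (setLIntegral_mono' measurableSet_Ioc fun t ht => ?_)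
      hint.lintegral_lt_top
    rw [ENNReal.ofReal_mul measureReal_nonneg, ofReal_measureReal]
    exact mul_le_mul' (measure_mono (subset_univ _)) le_rfl
  have near_top : ∫⁻ t in Ioi 1, μ {ω | t < W ω} * ENNReal.ofReal (t ^ (β - 1)) < ⊤ := by
    have hint : IntegrableOn (fun t : ℝ => K * t ^ (β - 1 - p)) (Ioi 1) :=
      (integrableOn_Ioi_rpow_of_lt (by linarith) one_pos).const_mul _
    refine lt_of_le_of_lt (setLIntegral_mono' measurableSet_Ioi fun t (ht : 1 < t) => ?_)
      hint.lintegral_lt_top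
    have ht0 : 0 < t := one_pos.trans ht
    calc μ {ω | t < W ω} * ENNReal.ofReal (t ^ (β - 1))
        ≤ ENNReal.ofReal (K * t ^ (-p)) * ENNReal.ofReal (t ^ (β - 1)) :=
          mul_le_mul' (htail t ht) le_rfl
      _ = ENNReal.ofReal (K * t ^ (β - 1 - p)) := by
          rw [← ENNReal.ofReal_mul' (by positivity), mul_assoc, ← Real.rpow_add ht0]
          ring_nf
  refine ⟨(hW.pow_const β).aestronglyMeasurable, ?_⟩
  rw [hasFiniteIntegral_iff_ofReal (by filter_upwards [hnn] with ω hω using by positivity),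
    lintegral_rpow_eq_lintegral_meas_lt_mul μ hnn hW.aemeasurable hβ,
    ← Ioc_union_Ioi_eq_Ioi zero_le_one]
  exact ENNReal.mul_lt_top ENNReal.ofReal_lt_top
    ((lintegral_union_le _ _ _).trans_lt (ENNReal.add_lt_top.2 ⟨near_zero, near_top⟩))

lemma integrable_rpow_of_setIntegral_sq_le [IsFiniteMeasure μ] {W : Ω → ℝ} (hW : Measurable W)
    (hnn : ∀ᵐ ω ∂μ, 0 ≤ W ω) {C q β : ℝ} (hC : 0 ≤ C)
    (hmom : ∀ x, 1 < x → ∫ ω in {ω | W ω ≤ x}, W ω ^ 2 ∂μ ≤ C * x ^ q)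
    (hβ : 0 < β) (hβq : β < 2 - q) :
    Integrable (fun ω => W ω ^ β) μ := by
  refine integrable_rpow_of_measure_lt_le hW hnn hβ hβq fun t ht =>
    measure_lt_le_of_measure_dyadic_le (by positivity : 0 ≤ C * 2 ^ q) (by linarith)
      (by linarith) fun s hs => ?_
  rw [neg_sub]
  exact measure_dyadic_le_of_setIntegral_sq_le hW hnn hmom (by linarith)

lemma setIntegral_sq_le_of_integrable_rpow {X : Ω → ℝ} (hX : Measurable X)
    (hnn : ∀ᵐ ω ∂μ, 0 ≤ X ω) {β : ℝ} (hβ : β ≤ 2) (hint : Integrable (fun ω => X ω ^ β) μ)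
    {n : ℝ} (hn : 0 ≤ n) :
    ∫ ω in {ω | X ω ≤ n}, X ω ^ 2 ∂μ ≤ n ^ (2 - β) * ∫ ω, X ω ^ β ∂μ := by
  rw [← integral_indicator (measurableSet_le hX measurable_const), ← integral_const_mul]
  refine integral_mono_of_nonneg (Eventually.of_forall fun ω => ?_) (hint.const_mul _) ?_
  · exact indicator_nonneg (fun ω _ => sq_nonneg (X ω)) ω
  · filter_upwards [hnn] with ω hω
    by_cases hωn : X ω ≤ n
    · rw [indicator_of_mem (show ω ∈ {ω | X ω ≤ n} from hωn)]
      exact sq_le_rpow_mul_rpow hω hωn hβ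
    · rw [indicator_of_notMem (show ω ∉ {ω | X ω ≤ n} from hωn)]
      have : 0 ≤ n ^ (2 - β) := Real.rpow_nonneg hn _
      positivity

lemma ProbabilityTheory.IndepFun.integrable_mul_rpow {X Y : Ω → ℝ} (hXY : IndepFun X Y μ)
    (hX : ∀ᵐ ω ∂μ, 0 ≤ X ω) (hY : ∀ᵐ ω ∂μ, 0 ≤ Y ω) {β : ℝ}
    (hXβ : Integrable (fun ω => X ω ^ β) μ) (hYβ : Integrable (fun ω => Y ω ^ β) μ) :
    Integrable (fun ω => (X ω * Y ω) ^ β) μ := by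
  have hpow : Measurable fun x : ℝ => x ^ β := by fun_prop
  refine ((hXY.comp hpow hpow).integrable_mul hXβ hYβ).congr ?_
  filter_upwards [hX, hY] with ω hXω hYω
  exact (Real.mul_rpow hXω hYω).symm

end Moments

theorem stmt_10_general {Ω : Type*} [MeasurableSpace Ω] (μ : Measure Ω) [IsProbabilityMeasure μ]
    (W₁ W₂ : Ω → ℝ) (hW₁ : Measurable W₁) (hW₂ : Measurable W₂)
    (hnn₁ : ∀ᵐ ω ∂μ, 0 ≤ W₁ ω) (hnn₂ : ∀ᵐ ω ∂μ, 0 ≤ W₂ ω)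
    (hindep : IndepFun W₁ W₂ μ) (hident : IdentDistrib W₁ W₂ μ μ)
    (α : ℝ) (hα1 : 1 < α) (hα2 : α < 2)
    (δ : ℝ) (hδα : 2 - α - 1 / α + 2 * δ < 0)
    (c₁ : ℝ) (hc₁ : 0 < c₁)
    (hmom2 : ∀ x : ℝ, 1 < x →
      (∫ ω in {ω | W₁ ω ≤ x}, (W₁ ω) ^ 2 ∂μ) ≤ c₁ * x ^ (2 - α + δ))
    (a : ℕ → ℝ)
    (halittle : (fun n : ℕ => 1 / a n) =o[atTop] fun n : ℕ => (n : ℝ) ^ (-(1 / α) + δ)) :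
    Tendsto (fun n : ℕ =>
        (1 / a n) * ∫ ω in {ω | W₁ ω * W₂ ω ≤ (n : ℝ)}, (W₁ ω) ^ 2 * (W₂ ω) ^ 2 ∂μ)
      atTop (𝓝 0) := by
  have hα_inv : 1 / α < 1 := (div_lt_one (by linarith)).2 hα1
  have hα_inv_pos : 0 < 1 / α := by positivity
  -- `β` is the midpoint of `(2 + δ - 1/α, α - δ)`, nonempty by `hδα`.
  obtain ⟨β, hβ0, hβ2, hβ_tail, hβ_rate⟩ : ∃ β : ℝ,
      0 < β ∧ β ≤ 2 ∧ β < 2 - (2 - α + δ) ∧ -(1 / α) + δ + (2 - β) < 0 :=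
    ⟨(2 + α - 1 / α) / 2, by linarith, by linarith, by linarith, by linarith⟩
  have hint₁ : Integrable (fun ω => W₁ ω ^ β) μ :=
    integrable_rpow_of_setIntegral_sq_le hW₁ hnn₁ hc₁.le hmom2 hβ0 hβ_tail
  have hint₂ : Integrable (fun ω => W₂ ω ^ β) μ :=
    (hident.comp (by fun_prop : Measurable fun x : ℝ => x ^ β)).integrable_iff.1 hint₁
  have hprod := hindep.integrable_mul_rpow hnn₁ hnn₂ hint₁ hint₂
  have hmeas : Measurable fun ω => W₁ ω * W₂ ω := hW₁.mul hW₂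
  have hprod_nn : ∀ᵐ ω ∂μ, 0 ≤ W₁ ω * W₂ ω := by
    filter_upwards [hnn₁, hnn₂] with ω h₁ h₂ using mul_nonneg h₁ h₂
  have htrunc : (fun n : ℕ => ∫ ω in {ω | W₁ ω * W₂ ω ≤ (n : ℝ)}, (W₁ ω) ^ 2 * (W₂ ω) ^ 2 ∂μ)
      =O[atTop] fun n : ℕ => (n : ℝ) ^ (2 - β) := by
    refine IsBigO.of_bound (∫ ω, (W₁ ω * W₂ ω) ^ β ∂μ) (Eventually.of_forall fun n => ?_)
    simp_rw [← mul_pow]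
    rw [Real.norm_of_nonneg (setIntegral_nonneg (measurableSet_le hmeas measurable_const)
      fun ω _ => sq_nonneg _), Real.norm_of_nonneg (by positivity), mul_comm]
    exact setIntegral_sq_le_of_integrable_rpow hmeas hprod_nn hβ2 hprod n.cast_nonneg
  exact tendsto_mul_of_isLittleO_rpow_of_isBigO_rpow halittle htrunc hβ_rate

theorem stmt_10 {Ω : Type*} [MeasurableSpace Ω] (μ : Measure Ω) [IsProbabilityMeasure μ]
    (W₁ W₂ : Ω → ℝ) (hW₁ : Measurable W₁) (hW₂ : Measurable W₂)
    (hnn₁ : ∀ᵐ ω ∂μ, 0 ≤ W₁ ω) (hnn₂ : ∀ᵐ ω ∂μ, 0 ≤ W₂ ω)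
    (hindep : IndepFun W₁ W₂ μ) (hident : IdentDistrib W₁ W₂ μ μ)
    (c α : ℝ) (hc : 0 < c) (hα1 : 1 < α) (hα2 : α < 2)
    (h : ℝ → ℝ) (hpos : ∀ᶠ x in atTop, 0 < h x) (hsv : SlowlyVarying h)
    (htail : Tendsto (fun x => (μ {ω | x < W₁ ω}).toReal / (c * x ^ (-α) * h x))
      atTop (𝓝 1))
    (δ : ℝ) (hδ : 0 < δ) (hδα : 2 - α - 1 / α + 2 * δ < 0)
    (c₁ : ℝ) (hc₁ : 0 < c₁)
    (hmom2 : ∀ x : ℝ, 1 < x →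
      (∫ ω in {ω | W₁ ω ≤ x}, (W₁ ω) ^ 2 ∂μ) ≤ c₁ * x ^ (2 - α + δ))
    (hmom1 : ∀ x : ℝ, 1 < x →
      (∫ ω in {ω | x ≤ W₁ ω}, W₁ ω ∂μ) ≤ c₁ * x ^ (1 - α + δ))
    (a : ℕ → ℝ) (ha : ∀ n, 0 < a n)
    (halittle : (fun n : ℕ => 1 / a n) =o[atTop] fun n : ℕ => (n : ℝ) ^ (-(1 / α) + δ)) :
    Tendsto (fun n : ℕ =>
        (1 / a n) * ∫ ω in {ω | W₁ ω * W₂ ω ≤ (n : ℝ)}, (W₁ ω) ^ 2 * (W₂ ω) ^ 2 ∂μ)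
      atTop (𝓝 0) :=
  stmt_10_general μ W₁ W₂ hW₁ hW₂ hnn₁ hnn₂ hindep hident α hα1 hα2 δ hδα c₁ hc₁ hmom2 a halittle
end

section
/- Under the same setting (W₁, W₂ i.i.d. nonnegative with P(W > x) ~ c·x^{−α}h(x), α ∈ (1,2), E[W·1{W ≥ x}] ≤ c₁·x^{1−α+δ} for x > 1, δ > 0 with 2 − α − 1/α + 2δ < 0, and 1/aₙ = o(n^{−1/α+δ})), one has (n/aₙ)·E[W₁W₂·1{W₁W₂ > n}] → 0 as n → ∞. -/
/-!
Write `β = α - 1 - δ`, so that `E[W; W ≥ t] ≤ c₁ t^(-β)` for `t > 1`, and fix `s < β`. Conditioning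
on `W₁ = x`, the truncated moment is `E[x W₂; W₂ > n / x]`: for `x ≥ n` it is at most `x E[W]`,
which integrates to `E[W₁; W₁ ≥ n] E[W] ≤ c₁ E[W] n^(-β)`; for `x < n` it is at most
`c₁ x (n / x)^(-s) = c₁ n^(-s) x^(1+s)`. Hence `E[W₁W₂; W₁W₂ > n] ≤ C n^(-s)` as soon as
`E[W^(1+s)] < ∞`, and this moment is finite because splitting `W` into dyadic blocks `[2^k, 2^(k+1))`
bounds it by a geometric series of ratio `2^(s-β)`. With `s` between `1 - 1/α + δ` and `β`,
the prefactor `n / aₙ = o(n^(1 - 1/α + δ))` loses against `n^(-s)`.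
-/

open MeasureTheory ProbabilityTheory Filter Topology Asymptotics
open scoped ENNReal

lemma ofReal_mul_rpow_le_tsum {s x : ℝ} (hs : 0 ≤ s) (hx : 0 ≤ x) :
    ENNReal.ofReal (x * x ^ s) ≤ ENNReal.ofReal (2 ^ s) * ENNReal.ofReal x +
      ∑' k : ℕ, ENNReal.ofReal ((2 ^ s) ^ (k + 2)) *
        (Set.Ici ((2 : ℝ) ^ (k + 1))).indicator ENNReal.ofReal x := by
  rw [mul_comm x, ENNReal.ofReal_mul (by positivity)]
  rcases lt_or_ge x 2 with hx2 | hx2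
  · refine le_add_right (mul_le_mul_left ?_ _)
    exact ENNReal.ofReal_le_ofReal (Real.rpow_le_rpow hx hx2.le hs)
  · obtain ⟨k, hk, hk'⟩ := exists_nat_pow_near (by linarith : 1 ≤ x / 2) one_lt_two
    have hxk : x ^ s ≤ (2 ^ s) ^ (k + 2) := by
      rw [Real.rpow_pow_comm zero_le_two]
      exact Real.rpow_le_rpow hx (by rw [pow_succ]; linarith) hs
    refine le_add_left (le_trans ?_ (ENNReal.le_tsum k))
    rw [Set.indicator_of_mem (by rw [Set.mem_Ici, pow_succ]; linarith)]
    exact mul_le_mul_left (ENNReal.ofReal_le_ofReal hxk) _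

lemma tsum_ofReal_two_rpow_pow_mul_ne_top {c β s : ℝ} (hsβ : s < β) :
    ∑' k : ℕ, ENNReal.ofReal ((2 ^ s) ^ (k + 2)) *
      ENNReal.ofReal (c * ((2 : ℝ) ^ (k + 1)) ^ (-β)) ≠ ∞ := by
  have hq : ENNReal.ofReal (2 ^ s) * ENNReal.ofReal (2 ^ (-β)) < 1 := by
    rw [← ENNReal.ofReal_mul (by positivity), ← Real.rpow_add two_pos, ENNReal.ofReal_lt_one]
    exact Real.rpow_lt_one_of_one_lt_of_neg one_lt_two (by linarith)
  have hterm : ∀ k : ℕ, ENNReal.ofReal ((2 ^ s) ^ (k + 2)) *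
      ENNReal.ofReal (c * ((2 : ℝ) ^ (k + 1)) ^ (-β)) =
      ENNReal.ofReal (2 ^ s) ^ 2 * ENNReal.ofReal (c * 2 ^ (-β)) *
        (ENNReal.ofReal (2 ^ s) * ENNReal.ofReal (2 ^ (-β))) ^ k := by
    intro k
    have hsplit : c * ((2 : ℝ) ^ (k + 1)) ^ (-β) = (2 ^ (-β)) ^ k * (c * 2 ^ (-β)) := by
      rw [← Real.rpow_pow_comm zero_le_two]; ring
    rw [hsplit, ENNReal.ofReal_mul (by positivity), ENNReal.ofReal_pow (by positivity),
      ENNReal.ofReal_pow (by positivity)]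
    ring
  simp_rw [hterm, ENNReal.tsum_mul_left, ENNReal.tsum_geometric]
  exact ENNReal.mul_ne_top
    (ENNReal.mul_ne_top (ENNReal.pow_ne_top ENNReal.ofReal_ne_top) ENNReal.ofReal_ne_top)
    (ENNReal.inv_ne_top.mpr (tsub_pos_of_lt hq).ne')

lemma lintegral_mul_rpow_ne_top {ν : Measure ℝ} {c β s : ℝ} (hν : ∀ᵐ x ∂ν, 0 ≤ x)
    (hm : ∫⁻ x, ENNReal.ofReal x ∂ν ≠ ∞)
    (hT : ∀ t, 1 < t → ∫⁻ x in Set.Ici t, ENNReal.ofReal x ∂ν ≤ ENNReal.ofReal (c * t ^ (-β)))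
    (hs : 0 ≤ s) (hsβ : s < β) :
    ∫⁻ x, ENNReal.ofReal (x * x ^ s) ∂ν ≠ ∞ := by
  refine ne_top_of_le_ne_top ?_
    (lintegral_mono_ae (hν.mono fun x hx => ofReal_mul_rpow_le_tsum hs hx))
  rw [lintegral_add_left (ENNReal.measurable_ofReal.const_mul _),
    lintegral_const_mul _ ENNReal.measurable_ofReal,
    lintegral_tsum fun k =>
      (ENNReal.measurable_ofReal.indicator measurableSet_Ici).aemeasurable.const_mul _]
  refine ENNReal.add_ne_top.mpr ⟨ENNReal.mul_ne_top ENNReal.ofReal_ne_top hm,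
    ne_top_of_le_ne_top (tsum_ofReal_two_rpow_pow_mul_ne_top (c := c) hsβ)
      (ENNReal.tsum_le_tsum fun k => ?_)⟩
  rw [lintegral_const_mul _ (ENNReal.measurable_ofReal.indicator measurableSet_Ici),
    lintegral_indicator measurableSet_Ici]
  gcongr
  exact hT _ (one_lt_pow₀ one_lt_two k.succ_ne_zero)

section Product

variable {ν : Measure ℝ} {N : ℝ}

lemma lintegral_indicator_mul_gt_le {x : ℝ} (hx : 0 < x) :
    ∫⁻ y, {p : ℝ × ℝ | N < p.1 * p.2}.indicator (fun p => ENNReal.ofReal (p.1 * p.2)) (x, y) ∂ν ≤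
      ENNReal.ofReal x * ∫⁻ y in Set.Ici (N / x), ENNReal.ofReal y ∂ν := by
  rw [← lintegral_indicator measurableSet_Ici, ← lintegral_const_mul' _ _ ENNReal.ofReal_ne_top]
  refine lintegral_mono fun y => ?_
  by_cases hy : N < x * y
  · rw [Set.indicator_of_mem (show (x, y) ∈ {p : ℝ × ℝ | N < p.1 * p.2} from hy),
      Set.indicator_of_mem (show y ∈ Set.Ici (N / x) from (div_le_iff₀' hx).2 hy.le),
      ENNReal.ofReal_mul hx.le]
  · rw [Set.indicator_of_notMem (show (x, y) ∉ {p : ℝ × ℝ | N < p.1 * p.2} from hy)]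
    exact zero_le

lemma lintegral_lintegral_indicator_mul_gt_le {c s : ℝ} (hν : ∀ᵐ x ∂ν, 0 ≤ x)
    (hT : ∀ t, 1 < t → ∫⁻ x in Set.Ici t, ENNReal.ofReal x ∂ν ≤ ENNReal.ofReal (c * t ^ (-s)))
    (hN : 1 < N) :
    ∫⁻ x, ∫⁻ y, {p : ℝ × ℝ | N < p.1 * p.2}.indicator
        (fun p => ENNReal.ofReal (p.1 * p.2)) (x, y) ∂ν ∂ν ≤
      ENNReal.ofReal (c * N ^ (-s)) *
        (∫⁻ x, ENNReal.ofReal x ∂ν + ∫⁻ x, ENNReal.ofReal (x * x ^ s) ∂ν) := by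
  set m := ∫⁻ x, ENNReal.ofReal x ∂ν
  have hinner : ∀ x, 0 ≤ x →
      ∫⁻ y, {p : ℝ × ℝ | N < p.1 * p.2}.indicator (fun p => ENNReal.ofReal (p.1 * p.2)) (x, y) ∂ν ≤
        (Set.Ici N).indicator (fun x => m * ENNReal.ofReal x) x +
          ENNReal.ofReal (c * N ^ (-s)) * ENNReal.ofReal (x * x ^ s) := by
    intro x hx
    rcases hx.eq_or_lt with rfl | hx
    · have hempty : ∀ y, (0, y) ∉ {p : ℝ × ℝ | N < p.1 * p.2} := by
        intro y (hy : N < 0 * y)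
        linarith [zero_mul y]
      simp [Set.indicator_of_notMem (hempty _)]
    refine (lintegral_indicator_mul_gt_le hx).trans ?_
    rcases le_or_gt N x with hNx | hxN
    · rw [Set.indicator_of_mem (Set.mem_Ici.2 hNx), mul_comm m]
      exact le_add_right (by gcongr; exact setLIntegral_le_lintegral _ _)
    · rw [Set.indicator_of_notMem (Set.notMem_Ici.2 hxN), zero_add]
      calc ENNReal.ofReal x * ∫⁻ y in Set.Ici (N / x), ENNReal.ofReal y ∂ν
          ≤ ENNReal.ofReal x * ENNReal.ofReal (c * (N / x) ^ (-s)) := by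
            gcongr; exact hT _ ((one_lt_div hx).2 hxN)
        _ = ENNReal.ofReal (c * N ^ (-s)) * ENNReal.ofReal (x * x ^ s) := by
            rw [← ENNReal.ofReal_mul hx.le, ← ENNReal.ofReal_mul' (by positivity),
              Real.div_rpow (by linarith) hx.le, Real.rpow_neg hx.le]
            have : x ^ s ≠ 0 := (Real.rpow_pos_of_pos hx s).ne'
            field_simp
  calc _ ≤ ∫⁻ x, ((Set.Ici N).indicator (fun x => m * ENNReal.ofReal x) x +
          ENNReal.ofReal (c * N ^ (-s)) * ENNReal.ofReal (x * x ^ s)) ∂ν :=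
        lintegral_mono_ae (hν.mono hinner)
    _ = m * ∫⁻ x in Set.Ici N, ENNReal.ofReal x ∂ν +
          ENNReal.ofReal (c * N ^ (-s)) * ∫⁻ x, ENNReal.ofReal (x * x ^ s) ∂ν := by
        rw [lintegral_add_left
            ((ENNReal.measurable_ofReal.const_mul m).indicator measurableSet_Ici),
          lintegral_indicator measurableSet_Ici, lintegral_const_mul _ ENNReal.measurable_ofReal,
          lintegral_const_mul' _ _ ENNReal.ofReal_ne_top]
    _ ≤ m * ENNReal.ofReal (c * N ^ (-s)) +
          ENNReal.ofReal (c * N ^ (-s)) * ∫⁻ x, ENNReal.ofReal (x * x ^ s) ∂ν := by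
        gcongr; exact hT N hN
    _ = _ := by ring

end Product

section Probability

variable {Ω : Type*} [MeasurableSpace Ω] {μ : Measure Ω}

lemma setIntegral_mul_gt_eq_toReal_lintegral [IsFiniteMeasure μ] {X Y : Ω → ℝ}
    (hX : Measurable X) (hY : Measurable Y) (hXY : IndepFun X Y μ) {N : ℝ} (hN : 0 ≤ N) :
    ∫ ω in {ω | N < X ω * Y ω}, X ω * Y ω ∂μ =
      (∫⁻ x, ∫⁻ y, {p : ℝ × ℝ | N < p.1 * p.2}.indicator
        (fun p => ENNReal.ofReal (p.1 * p.2)) (x, y) ∂(μ.map Y) ∂(μ.map X)).toReal := by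
  have hS : MeasurableSet {ω | N < X ω * Y ω} := measurableSet_lt measurable_const (hX.mul hY)
  have hG : Measurable ({p : ℝ × ℝ | N < p.1 * p.2}.indicator
      (fun p => ENNReal.ofReal (p.1 * p.2))) :=
    (measurable_fst.mul measurable_snd).ennreal_ofReal.indicator
      (measurableSet_lt measurable_const (measurable_fst.mul measurable_snd))
  rw [integral_eq_lintegral_of_nonneg_ae
      ((ae_restrict_iff' hS).2 (Eventually.of_forall fun ω hω => (hN.trans_lt hω).le))
      (hX.mul hY).aestronglyMeasurable.restrict,
    ← lintegral_indicator hS]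
  change (∫⁻ ω, {p : ℝ × ℝ | N < p.1 * p.2}.indicator
    (fun p => ENNReal.ofReal (p.1 * p.2)) (X ω, Y ω) ∂μ).toReal = _
  rw [← lintegral_map hG (hX.prodMk hY),
    (indepFun_iff_map_prod_eq_prod_map_map hX.aemeasurable hY.aemeasurable).1 hXY,
    lintegral_prod _ hG.aemeasurable]

lemma setLIntegral_map_Ici_eq {X : Ω → ℝ} (hX : Measurable X) (hint : Integrable X μ)
    (hnn : ∀ᵐ ω ∂μ, 0 ≤ X ω) (t : ℝ) :
    ∫⁻ x in Set.Ici t, ENNReal.ofReal x ∂(μ.map X) =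
      ENNReal.ofReal (∫ ω in {ω | t ≤ X ω}, X ω ∂μ) := by
  rw [setLIntegral_map measurableSet_Ici ENNReal.measurable_ofReal hX,
    ofReal_integral_eq_lintegral_ofReal hint.integrableOn (ae_restrict_of_ae hnn)]
  rfl

theorem exists_norm_setIntegral_mul_gt_le [IsProbabilityMeasure μ] {W₁ W₂ : Ω → ℝ}
    (hW₁ : Measurable W₁) (hW₂ : Measurable W₂) (hnn₁ : ∀ᵐ ω ∂μ, 0 ≤ W₁ ω)
    (hindep : IndepFun W₁ W₂ μ) (hident : IdentDistrib W₁ W₂ μ μ) (hint : Integrable W₁ μ)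
    {c β s : ℝ} (hc : 0 ≤ c) (hs : 0 ≤ s) (hsβ : s < β)
    (hmom : ∀ t, 1 < t → ∫ ω in {ω | t ≤ W₁ ω}, W₁ ω ∂μ ≤ c * t ^ (-β)) :
    ∃ C, ∀ N, 1 < N → ‖∫ ω in {ω | N < W₁ ω * W₂ ω}, W₁ ω * W₂ ω ∂μ‖ ≤ C * N ^ (-s) := by
  set ν := μ.map W₁
  have hν : ∀ᵐ x ∂ν, 0 ≤ x := (ae_map_iff hW₁.aemeasurable measurableSet_Ici).2 hnn₁
  have hm : ∫⁻ x, ENNReal.ofReal x ∂ν ≠ ∞ := by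
    rw [lintegral_map ENNReal.measurable_ofReal hW₁]
    exact hint.lintegral_lt_top.ne
  have hTβ : ∀ t, 1 < t →
      ∫⁻ x in Set.Ici t, ENNReal.ofReal x ∂ν ≤ ENNReal.ofReal (c * t ^ (-β)) := fun t ht =>
    (setLIntegral_map_Ici_eq hW₁ hint hnn₁ t).trans_le (ENNReal.ofReal_le_ofReal (hmom t ht))
  have hTs : ∀ t, 1 < t →
      ∫⁻ x in Set.Ici t, ENNReal.ofReal x ∂ν ≤ ENNReal.ofReal (c * t ^ (-s)) := fun t ht =>
    (hTβ t ht).trans (ENNReal.ofReal_le_ofReal (by gcongr; exact ht.le))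
  set K := ∫⁻ x, ENNReal.ofReal x ∂ν + ∫⁻ x, ENNReal.ofReal (x * x ^ s) ∂ν
  have hK : K ≠ ∞ := ENNReal.add_ne_top.2 ⟨hm, lintegral_mul_rpow_ne_top hν hm hTβ hs hsβ⟩
  refine ⟨c * K.toReal, fun N hN => ?_⟩
  rw [setIntegral_mul_gt_eq_toReal_lintegral hW₁ hW₂ hindep (by linarith), ← hident.map_eq,
    Real.norm_of_nonneg ENNReal.toReal_nonneg]
  calc _ ≤ (ENNReal.ofReal (c * N ^ (-s)) * K).toReal :=
        ENNReal.toReal_mono (ENNReal.mul_ne_top ENNReal.ofReal_ne_top hK)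
          (lintegral_lintegral_indicator_mul_gt_le hν hTs hN)
    _ = c * K.toReal * N ^ (-s) := by
        rw [ENNReal.toReal_mul, ENNReal.toReal_ofReal (by positivity)]; ring

end Probability

lemma tendsto_div_mul_of_norm_le_rpow {a f : ℕ → ℝ} {C r s : ℝ}
    (hf : ∀ᶠ n in atTop, ‖f n‖ ≤ C * (n : ℝ) ^ (-s))
    (ha : (fun n : ℕ => 1 / a n) =o[atTop] fun n : ℕ => (n : ℝ) ^ r) (hrs : r + 1 - s < 0) :
    Tendsto (fun n : ℕ => (n : ℝ) / a n * f n) atTop (𝓝 0) := by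
  have hO : (fun n : ℕ => (n : ℝ) / a n * f n) =O[atTop]
      fun n : ℕ => 1 / a n * (n : ℝ) ^ (1 - s) := by
    refine IsBigO.of_bound C ((hf.and (eventually_gt_atTop 0)).mono fun n ⟨hfn, hn⟩ => ?_)
    have hn : (0 : ℝ) < n := by exact_mod_cast hn
    calc _ = ‖1 / a n‖ * n * ‖f n‖ := by
          rw [div_eq_mul_one_div, norm_mul, norm_mul, Real.norm_natCast]; ring
      _ ≤ ‖1 / a n‖ * n * (C * (n : ℝ) ^ (-s)) := by gcongr
      _ = C * ‖1 / a n * (n : ℝ) ^ (1 - s)‖ := by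
          rw [norm_mul, Real.norm_of_nonneg (Real.rpow_nonneg hn.le _), Real.rpow_sub hn,
            Real.rpow_one, Real.rpow_neg hn.le]
          ring
  have hlim : Tendsto (fun n : ℕ => (n : ℝ) ^ r * (n : ℝ) ^ (1 - s)) atTop (𝓝 0) := by
    refine ((tendsto_rpow_neg_atTop (neg_pos.2 hrs)).comp tendsto_natCast_atTop_atTop).congr' ?_
    filter_upwards [eventually_gt_atTop 0] with n hn
    rw [Function.comp_apply, neg_neg, ← Real.rpow_add (by exact_mod_cast hn)]
    ring_nf
  exact (hO.trans_isLittleO (ha.mul_isBigO (isBigO_refl _ _))).trans_tendsto hlim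

theorem stmt_11_general {Ω : Type*} [MeasurableSpace Ω] (μ : Measure Ω) [IsProbabilityMeasure μ]
    (W₁ W₂ : Ω → ℝ) (hW₁ : Measurable W₁) (hW₂ : Measurable W₂)
    (hnn₁ : ∀ᵐ ω ∂μ, 0 ≤ W₁ ω)
    (hindep : IndepFun W₁ W₂ μ) (hident : IdentDistrib W₁ W₂ μ μ)
    (hint : Integrable W₁ μ)
    (α : ℝ) (hα1 : 1 < α)
    (δ : ℝ) (hδα : 2 - α - 1 / α + 2 * δ < 0)
    (c₁ : ℝ) (hc₁ : 0 < c₁)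
    (hmom1 : ∀ x : ℝ, 1 < x →
      (∫ ω in {ω | x ≤ W₁ ω}, W₁ ω ∂μ) ≤ c₁ * x ^ (1 - α + δ))
    (a : ℕ → ℝ)
    (halittle : (fun n : ℕ => 1 / a n) =o[atTop] fun n : ℕ => (n : ℝ) ^ (-(1 / α) + δ)) :
    Tendsto (fun n : ℕ =>
        ((n : ℝ) / a n) * ∫ ω in {ω | (n : ℝ) < W₁ ω * W₂ ω}, W₁ ω * W₂ ω ∂μ)
      atTop (𝓝 0) := by
  have hα_inv : 1 / α < 1 := (div_lt_one (by linarith)).2 hα1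
  -- `s` is the midpoint of `(1 - 1 / α + δ, α - 1 - δ)`, an interval that is nonempty by `hδα`.
  obtain ⟨C, hC⟩ := exists_norm_setIntegral_mul_gt_le (s := (α - 1 / α) / 2) (β := α - 1 - δ)
    hW₁ hW₂ hnn₁ hindep hident hint hc₁.le (by linarith) (by linarith)
    (fun t ht => (hmom1 t ht).trans_eq (by ring_nf))
  exact tendsto_div_mul_of_norm_le_rpow
    ((eventually_gt_atTop 1).mono fun n hn => hC n (by exact_mod_cast hn)) halittle (by linarith)

theorem stmt_11 {Ω : Type*} [MeasurableSpace Ω] (μ : Measure Ω) [IsProbabilityMeasure μ]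
    (W₁ W₂ : Ω → ℝ) (hW₁ : Measurable W₁) (hW₂ : Measurable W₂)
    (hnn₁ : ∀ᵐ ω ∂μ, 0 ≤ W₁ ω) (hnn₂ : ∀ᵐ ω ∂μ, 0 ≤ W₂ ω)
    (hindep : IndepFun W₁ W₂ μ) (hident : IdentDistrib W₁ W₂ μ μ)
    (hint : Integrable W₁ μ)
    (c α : ℝ) (hc : 0 < c) (hα1 : 1 < α) (hα2 : α < 2)
    (h : ℝ → ℝ) (hpos : ∀ᶠ x in atTop, 0 < h x) (hsv : SlowlyVarying h)
    (htail : Tendsto (fun x => (μ {ω | x < W₁ ω}).toReal / (c * x ^ (-α) * h x))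
      atTop (𝓝 1))
    (δ : ℝ) (hδ : 0 < δ) (hδα : 2 - α - 1 / α + 2 * δ < 0)
    (c₁ : ℝ) (hc₁ : 0 < c₁)
    (hmom1 : ∀ x : ℝ, 1 < x →
      (∫ ω in {ω | x ≤ W₁ ω}, W₁ ω ∂μ) ≤ c₁ * x ^ (1 - α + δ))
    (a : ℕ → ℝ) (ha : ∀ n, 0 < a n)
    (halittle : (fun n : ℕ => 1 / a n) =o[atTop] fun n : ℕ => (n : ℝ) ^ (-(1 / α) + δ)) :
    Tendsto (fun n : ℕ =>
        ((n : ℝ) / a n) * ∫ ω in {ω | (n : ℝ) < W₁ ω * W₂ ω}, W₁ ω * W₂ ω ∂μ)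
      atTop (𝓝 0) :=
  stmt_11_general μ W₁ W₂ hW₁ hW₂ hnn₁ hindep hident hint α hα1 δ hδα c₁ hc₁ hmom1 a halittle
end
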